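/- Type erasure is semantics-preserving: if Γ ⊢ t : τ in λτ, then Γ ⊢ t □ₙ erase(t) : τ for every n and both directions □ ∈ {≲,≳} of the step-indexed cross-language logical relation. -/

import Mathlib

set_option maxHeartbeats 1000000

namespace FAC

/-! ## Source language λτ : simply-typed CBV lambda calculus -/

inductive Ty : Type
  | unit : Ty
  | bool : Ty
  | arr (a b : Ty) : Ty
  | prod (a b : Ty) : Ty
  | sum (a b : Ty) : Ty
deriving DecidableEq

inductive STm : Type
  | var (n : ℕ)
  | unit | tt | ff
  | lam (τ : Ty) (t : STm)
  | app (t₁ t₂ : STm)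
  | pair (t₁ t₂ : STm)
  | p1 (t : STm)
  | p2 (t : STm)
  | inl (t : STm)
  | inr (t : STm)
  | caseOf (t t₁ t₂ : STm)   -- branches bind de Bruijn index 0
  | seq (t₁ t₂ : STm)
  | tif (t t₁ t₂ : STm)
  | fixt (a b : Ty) (t : STm)
deriving DecidableEq

inductive SIsVal : STm → Prop
  | unit : SIsVal .unit
  | tt : SIsVal .tt
  | ff : SIsVal .ff
  | lam {τ t} : SIsVal (.lam τ t)
  | pair {t₁ t₂} : SIsVal t₁ → SIsVal t₂ → SIsVal (.pair t₁ t₂)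
  | inl {t} : SIsVal t → SIsVal (.inl t)
  | inr {t} : SIsVal t → SIsVal (.inr t)

def liftR (f : ℕ → ℕ) : ℕ → ℕ
  | 0 => 0
  | n+1 => f n + 1

def STm.rename (f : ℕ → ℕ) : STm → STm
  | .var n => .var (f n)
  | .unit => .unit
  | .tt => .tt
  | .ff => .ff
  | .lam τ t => .lam τ (t.rename (liftR f))
  | .app a b => .app (a.rename f) (b.rename f)
  | .pair a b => .pair (a.rename f) (b.rename f)
  | .p1 t => .p1 (t.rename f)
  | .p2 t => .p2 (t.rename f)
  | .inl t => .inl (t.rename f)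
  | .inr t => .inr (t.rename f)
  | .caseOf t a b => .caseOf (t.rename f) (a.rename (liftR f)) (b.rename (liftR f))
  | .seq a b => .seq (a.rename f) (b.rename f)
  | .tif t a b => .tif (t.rename f) (a.rename f) (b.rename f)
  | .fixt a b t => .fixt a b (t.rename f)

def liftS (σ : ℕ → STm) : ℕ → STm
  | 0 => .var 0
  | n+1 => (σ n).rename Nat.succ

def STm.subst (σ : ℕ → STm) : STm → STm
  | .var n => σ n
  | .unit => .unit
  | .tt => .tt
  | .ff => .ff
  | .lam τ t => .lam τ (t.subst (liftS σ))
  | .app a b => .app (a.subst σ) (b.subst σ)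
  | .pair a b => .pair (a.subst σ) (b.subst σ)
  | .p1 t => .p1 (t.subst σ)
  | .p2 t => .p2 (t.subst σ)
  | .inl t => .inl (t.subst σ)
  | .inr t => .inr (t.subst σ)
  | .caseOf t a b => .caseOf (t.subst σ) (a.subst (liftS σ)) (b.subst (liftS σ))
  | .seq a b => .seq (a.subst σ) (b.subst σ)
  | .tif t a b => .tif (t.subst σ) (a.subst σ) (b.subst σ)
  | .fixt a b t => .fixt a b (t.subst σ)

/-- substitute `v` for de Bruijn index 0 in `t` -/
def STm.subst0 (t v : STm) : STm :=
  t.subst (fun n => match n with | 0 => v | n+1 => .var n)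

/-- Typing judgement for λτ. -/
inductive HasTy : List Ty → STm → Ty → Prop
  | var {Γ n τ} : Γ[n]? = some τ → HasTy Γ (.var n) τ
  | unit {Γ} : HasTy Γ .unit .unit
  | tt {Γ} : HasTy Γ .tt .bool
  | ff {Γ} : HasTy Γ .ff .bool
  | lam {Γ τ τ' t} : HasTy (τ :: Γ) t τ' → HasTy Γ (.lam τ t) (.arr τ τ')
  | app {Γ t t' τ τ'} : HasTy Γ t (.arr τ' τ) → HasTy Γ t' τ' → HasTy Γ (.app t t') τ
  | pair {Γ t₁ t₂ τ₁ τ₂} : HasTy Γ t₁ τ₁ → HasTy Γ t₂ τ₂ → HasTy Γ (.pair t₁ t₂) (.prod τ₁ τ₂)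
  | p1 {Γ t τ₁ τ₂} : HasTy Γ t (.prod τ₁ τ₂) → HasTy Γ (.p1 t) τ₁
  | p2 {Γ t τ₁ τ₂} : HasTy Γ t (.prod τ₁ τ₂) → HasTy Γ (.p2 t) τ₂
  | inl {Γ t τ₁ τ₂} : HasTy Γ t τ₁ → HasTy Γ (.inl t) (.sum τ₁ τ₂)
  | inr {Γ t τ₁ τ₂} : HasTy Γ t τ₂ → HasTy Γ (.inr t) (.sum τ₁ τ₂)
  | caseOf {Γ t t₁ t₂ τ₁ τ₂ τ} : HasTy Γ t (.sum τ₁ τ₂) →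
      HasTy (τ₁ :: Γ) t₁ τ → HasTy (τ₂ :: Γ) t₂ τ → HasTy Γ (.caseOf t t₁ t₂) τ
  | seq {Γ t₁ t₂ τ} : HasTy Γ t₁ .unit → HasTy Γ t₂ τ → HasTy Γ (.seq t₁ t₂) τ
  | tif {Γ t t₁ t₂ τ} : HasTy Γ t .bool → HasTy Γ t₁ τ → HasTy Γ t₂ τ →
      HasTy Γ (.tif t t₁ t₂) τ
  | fixt {Γ t a b} : HasTy Γ t (.arr (.arr a b) (.arr a b)) → HasTy Γ (.fixt a b t) (.arr a b)

/-- Small-step CBV reduction for λτ (evaluation contexts are rendered as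
congruence rules enforcing left-to-right call-by-value order). -/
inductive SStep : STm → STm → Prop
  | app1 {t₁ t₁' t₂} : SStep t₁ t₁' → SStep (.app t₁ t₂) (.app t₁' t₂)
  | app2 {v t t'} : SIsVal v → SStep t t' → SStep (.app v t) (.app v t')
  | beta {τ t v} : SIsVal v → SStep (.app (.lam τ t) v) (t.subst0 v)
  | pair1 {t₁ t₁' t₂} : SStep t₁ t₁' → SStep (.pair t₁ t₂) (.pair t₁' t₂)
  | pair2 {v t t'} : SIsVal v → SStep t t' → SStep (.pair v t) (.pair v t')
  | p1C {t t'} : SStep t t' → SStep (.p1 t) (.p1 t')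
  | p2C {t t'} : SStep t t' → SStep (.p2 t) (.p2 t')
  | p1V {v₁ v₂} : SIsVal v₁ → SIsVal v₂ → SStep (.p1 (.pair v₁ v₂)) v₁
  | p2V {v₁ v₂} : SIsVal v₁ → SIsVal v₂ → SStep (.p2 (.pair v₁ v₂)) v₂
  | inlC {t t'} : SStep t t' → SStep (.inl t) (.inl t')
  | inrC {t t'} : SStep t t' → SStep (.inr t) (.inr t')
  | caseC {t t' t₁ t₂} : SStep t t' → SStep (.caseOf t t₁ t₂) (.caseOf t' t₁ t₂)
  | caseL {v t₁ t₂} : SIsVal v → SStep (.caseOf (.inl v) t₁ t₂) (t₁.subst0 v)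
  | caseR {v t₁ t₂} : SIsVal v → SStep (.caseOf (.inr v) t₁ t₂) (t₂.subst0 v)
  | seqC {t₁ t₁' t₂} : SStep t₁ t₁' → SStep (.seq t₁ t₂) (.seq t₁' t₂)
  | seqN {t} : SStep (.seq .unit t) t
  | tifC {t t' t₁ t₂} : SStep t t' → SStep (.tif t t₁ t₂) (.tif t' t₁ t₂)
  | tifT {t₁ t₂} : SStep (.tif .tt t₁ t₂) t₁
  | tifF {t₁ t₂} : SStep (.tif .ff t₁ t₂) t₂
  | fixC {a b t t'} : SStep t t' → SStep (.fixt a b t) (.fixt a b t')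
  | fixBeta {a b t} :
      SStep (.fixt a b (.lam (.arr a b) t))
        (t.subst0 (.lam a (.app ((STm.fixt a b (.lam (.arr a b) t)).rename Nat.succ) (.var 0))))

def SStepN : ℕ → STm → STm → Prop
  | 0, t, t' => t = t'
  | n+1, t, t'' => ∃ t', SStep t t' ∧ SStepN n t' t''

def SStepStar (t t' : STm) : Prop := ∃ n, SStepN n t t'

/-- termination with a value -/
def SHalts (t : STm) : Prop := ∃ n v, SStepN n t v ∧ SIsVal v

end FAC
/-! ## Target language λu : untyped CBV lambda calculus with `wrong` -/

namespace FAC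

inductive UTm : Type
  | var (n : ℕ)
  | unit | tt | ff
  | lam (t : UTm)
  | app (t₁ t₂ : UTm)
  | pair (t₁ t₂ : UTm)
  | p1 (t : UTm)
  | p2 (t : UTm)
  | inl (t : UTm)
  | inr (t : UTm)
  | caseOf (t t₁ t₂ : UTm)
  | seq (t₁ t₂ : UTm)
  | tif (t t₁ t₂ : UTm)
  | wrong
deriving DecidableEq

inductive UIsVal : UTm → Prop
  | unit : UIsVal .unit
  | tt : UIsVal .tt
  | ff : UIsVal .ff
  | lam {t} : UIsVal (.lam t)
  | pair {t₁ t₂} : UIsVal t₁ → UIsVal t₂ → UIsVal (.pair t₁ t₂)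
  | inl {t} : UIsVal t → UIsVal (.inl t)
  | inr {t} : UIsVal t → UIsVal (.inr t)

def UTm.rename (f : ℕ → ℕ) : UTm → UTm
  | .var n => .var (f n)
  | .unit => .unit
  | .tt => .tt
  | .ff => .ff
  | .lam t => .lam (t.rename (liftR f))
  | .app a b => .app (a.rename f) (b.rename f)
  | .pair a b => .pair (a.rename f) (b.rename f)
  | .p1 t => .p1 (t.rename f)
  | .p2 t => .p2 (t.rename f)
  | .inl t => .inl (t.rename f)
  | .inr t => .inr (t.rename f)
  | .caseOf t a b => .caseOf (t.rename f) (a.rename (liftR f)) (b.rename (liftR f))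
  | .seq a b => .seq (a.rename f) (b.rename f)
  | .tif t a b => .tif (t.rename f) (a.rename f) (b.rename f)
  | .wrong => .wrong

def liftU (σ : ℕ → UTm) : ℕ → UTm
  | 0 => .var 0
  | n+1 => (σ n).rename Nat.succ

def UTm.subst (σ : ℕ → UTm) : UTm → UTm
  | .var n => σ n
  | .unit => .unit
  | .tt => .tt
  | .ff => .ff
  | .lam t => .lam (t.subst (liftU σ))
  | .app a b => .app (a.subst σ) (b.subst σ)
  | .pair a b => .pair (a.subst σ) (b.subst σ)
  | .p1 t => .p1 (t.subst σ)
  | .p2 t => .p2 (t.subst σ)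
  | .inl t => .inl (t.subst σ)
  | .inr t => .inr (t.subst σ)
  | .caseOf t a b => .caseOf (t.subst σ) (a.subst (liftU σ)) (b.subst (liftU σ))
  | .seq a b => .seq (a.subst σ) (b.subst σ)
  | .tif t a b => .tif (t.subst σ) (a.subst σ) (b.subst σ)
  | .wrong => .wrong

def UTm.subst0 (t v : UTm) : UTm :=
  t.subst (fun n => match n with | 0 => v | n+1 => .var n)

/-- Well-scopedness: all free variables are `< n`. -/
def UTm.ws : UTm → ℕ → Prop
  | .var m, n => m < n
  | .unit, _ => True
  | .tt, _ => True
  | .ff, _ => True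
  | .lam t, n => t.ws (n+1)
  | .app a b, n => a.ws n ∧ b.ws n
  | .pair a b, n => a.ws n ∧ b.ws n
  | .p1 t, n => t.ws n
  | .p2 t, n => t.ws n
  | .inl t, n => t.ws n
  | .inr t, n => t.ws n
  | .caseOf t a b, n => t.ws n ∧ a.ws (n+1) ∧ b.ws (n+1)
  | .seq a b, n => a.ws n ∧ b.ws n
  | .tif t a b, n => t.ws n ∧ a.ws n ∧ b.ws n
  | .wrong, _ => True

/-- Small-step CBV reduction for λu, with propagation of `wrong` out of any
non-trivial evaluation context and ill-typed eliminations stepping to `wrong`. -/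
inductive UStep : UTm → UTm → Prop
  | app1 {t₁ t₁' t₂} : UStep t₁ t₁' → UStep (.app t₁ t₂) (.app t₁' t₂)
  | app2 {v t t'} : UIsVal v → UStep t t' → UStep (.app v t) (.app v t')
  | beta {t v} : UIsVal v → UStep (.app (.lam t) v) (t.subst0 v)
  | appW1 {t} : UStep (.app .wrong t) .wrong
  | appW2 {v} : UIsVal v → UStep (.app v .wrong) .wrong
  | appWrong {v₁ v₂} : UIsVal v₁ → UIsVal v₂ → (∀ t, v₁ ≠ .lam t) → UStep (.app v₁ v₂) .wrong
  | pair1 {t₁ t₁' t₂} : UStep t₁ t₁' → UStep (.pair t₁ t₂) (.pair t₁' t₂)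
  | pair2 {v t t'} : UIsVal v → UStep t t' → UStep (.pair v t) (.pair v t')
  | pairW1 {t} : UStep (.pair .wrong t) .wrong
  | pairW2 {v} : UIsVal v → UStep (.pair v .wrong) .wrong
  | p1C {t t'} : UStep t t' → UStep (.p1 t) (.p1 t')
  | p2C {t t'} : UStep t t' → UStep (.p2 t) (.p2 t')
  | p1W : UStep (.p1 .wrong) .wrong
  | p2W : UStep (.p2 .wrong) .wrong
  | p1V {v₁ v₂} : UIsVal v₁ → UIsVal v₂ → UStep (.p1 (.pair v₁ v₂)) v₁
  | p2V {v₁ v₂} : UIsVal v₁ → UIsVal v₂ → UStep (.p2 (.pair v₁ v₂)) v₂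
  | p1Wrong {v} : UIsVal v → (∀ a b, v ≠ .pair a b) → UStep (.p1 v) .wrong
  | p2Wrong {v} : UIsVal v → (∀ a b, v ≠ .pair a b) → UStep (.p2 v) .wrong
  | inlC {t t'} : UStep t t' → UStep (.inl t) (.inl t')
  | inrC {t t'} : UStep t t' → UStep (.inr t) (.inr t')
  | inlW : UStep (.inl .wrong) .wrong
  | inrW : UStep (.inr .wrong) .wrong
  | caseC {t t' t₁ t₂} : UStep t t' → UStep (.caseOf t t₁ t₂) (.caseOf t' t₁ t₂)
  | caseW {t₁ t₂} : UStep (.caseOf .wrong t₁ t₂) .wrong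
  | caseL {v t₁ t₂} : UIsVal v → UStep (.caseOf (.inl v) t₁ t₂) (t₁.subst0 v)
  | caseR {v t₁ t₂} : UIsVal v → UStep (.caseOf (.inr v) t₁ t₂) (t₂.subst0 v)
  | caseWrong {v t₁ t₂} : UIsVal v → (∀ w, v ≠ .inl w) → (∀ w, v ≠ .inr w) →
      UStep (.caseOf v t₁ t₂) .wrong
  | seqC {t₁ t₁' t₂} : UStep t₁ t₁' → UStep (.seq t₁ t₂) (.seq t₁' t₂)
  | seqW {t} : UStep (.seq .wrong t) .wrong
  | seqN {t} : UStep (.seq .unit t) t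
  | seqWrong {v t} : UIsVal v → v ≠ .unit → UStep (.seq v t) .wrong
  | tifC {t t' t₁ t₂} : UStep t t' → UStep (.tif t t₁ t₂) (.tif t' t₁ t₂)
  | tifW {t₁ t₂} : UStep (.tif .wrong t₁ t₂) .wrong
  | tifT {t₁ t₂} : UStep (.tif .tt t₁ t₂) t₁
  | tifF {t₁ t₂} : UStep (.tif .ff t₁ t₂) t₂
  | tifWrong {v t₁ t₂} : UIsVal v → v ≠ .tt → v ≠ .ff → UStep (.tif v t₁ t₂) .wrong

def UStepN : ℕ → UTm → UTm → Prop
  | 0, t, t' => t = t'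
  | n+1, t, t'' => ∃ t', UStep t t' ∧ UStepN n t' t''

def UStepStar (t t' : UTm) : Prop := ∃ n, UStepN n t t'

def UStepPlus (t t' : UTm) : Prop := ∃ n, 0 < n ∧ UStepN n t t'

/-- termination with a value (`wrong` is not a value) -/
def UHalts (t : UTm) : Prop := ∃ n v, UStepN n t v ∧ UIsVal v

end FAC
/-! ## Type erasure and the Z combinator -/

namespace FAC

/-- the Z (call-by-value Y) combinator: `λf.(λx. f (λy. x x y)) (λx. f (λy. x x y))` -/
def Zcomb : UTm :=
  .lam (.app
    (.lam (.app (.var 1) (.lam (.app (.app (.var 1) (.var 1)) (.var 0)))))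
    (.lam (.app (.var 1) (.lam (.app (.app (.var 1) (.var 1)) (.var 0))))))

/-- `λx. f (λy. x x y)`, for a given (closed) `f` -/
def gOf (f : UTm) : UTm :=
  .lam (.app (f.rename Nat.succ) (.lam (.app (.app (.var 1) (.var 1)) (.var 0))))

/-- Type erasure from λτ to λu; `fix` is mapped to the Z combinator. -/
def erase : STm → UTm
  | .var n => .var n
  | .unit => .unit
  | .tt => .tt
  | .ff => .ff
  | .lam _ t => .lam (erase t)
  | .app a b => .app (erase a) (erase b)
  | .pair a b => .pair (erase a) (erase b)
  | .p1 t => .p1 (erase t)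
  | .p2 t => .p2 (erase t)
  | .inl t => .inl (erase t)
  | .inr t => .inr (erase t)
  | .caseOf t a b => .caseOf (erase t) (erase a) (erase b)
  | .seq a b => .seq (erase a) (erase b)
  | .tif t a b => .tif (erase t) (erase a) (erase b)
  | .fixt _ _ t => .app Zcomb (erase t)

/-! ## Dynamic type-checking wrappers protect/confine -/

/-- `wrap τ true = protect_τ`, `wrap τ false = confine_τ`. -/
def wrap : Ty → Bool → UTm
  | .unit, true => .lam (.var 0)
  | .bool, true => .lam (.var 0)
  | .unit, false => .lam (.seq (.var 0) .unit)
  | .bool, false => .lam (.tif (.var 0) .tt .ff)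
  | .prod a b, p => .lam (.pair (.app (wrap a p) (.p1 (.var 0))) (.app (wrap b p) (.p2 (.var 0))))
  | .sum a b, p => .lam (.caseOf (.var 0)
      (.inl (.app (wrap a p) (.var 0)))
      (.inr (.app (wrap b p) (.var 0))))
  | .arr a b, p => .lam (.lam (.app (wrap b p) (.app (.var 1) (.app (wrap a (!p)) (.var 0)))))

def protect (τ : Ty) : UTm := wrap τ true
def confine (τ : Ty) : UTm := wrap τ false

/-- the compiler: protect the erased term -/
def compile (τ : Ty) (t : STm) : UTm := .app (protect τ) (erase t)

/-! ## UVal and its tools -/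

/-- the family of λτ types UVal_n -/
def UValTy : ℕ → Ty
  | 0 => .unit
  | n+1 => .sum .unit (.sum .unit (.sum .bool (.sum (.prod (UValTy n) (UValTy n))
      (.sum (.sum (UValTy n) (UValTy n)) (.arr (UValTy n) (UValTy n))))))

def inUnk : STm := .inl .unit
def inUnit (v : STm) : STm := .inr (.inl v)
def inBool (v : STm) : STm := .inr (.inr (.inl v))
def inProd (v : STm) : STm := .inr (.inr (.inr (.inl v)))
def inSum (v : STm) : STm := .inr (.inr (.inr (.inr (.inl v))))
def inArr (v : STm) : STm := .inr (.inr (.inr (.inr (.inr v))))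

def unkUVal : ℕ → STm
  | 0 => .unit
  | _+1 => inUnk

/-- the diverging term `omega_τ = fix_{Unit→τ} (λx:Unit→τ. x) unit` -/
def omegaTm (τ : Ty) : STm :=
  .app (.fixt .unit τ (.lam (.arr .unit τ) (.var 0))) .unit

/-- `caseUVal_{Unit;n} : UVal_{n+1} → Unit` -/
def caseUnitU (n : ℕ) : STm :=
  .lam (UValTy (n+1)) (.caseOf (.var 0) (omegaTm .unit)
    (.caseOf (.var 0) (.var 0) (omegaTm .unit)))

def caseBoolU (n : ℕ) : STm :=
  .lam (UValTy (n+1)) (.caseOf (.var 0) (omegaTm .bool)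
    (.caseOf (.var 0) (omegaTm .bool)
      (.caseOf (.var 0) (.var 0) (omegaTm .bool))))

def caseProdU (n : ℕ) : STm :=
  .lam (UValTy (n+1)) (.caseOf (.var 0) (omegaTm (.prod (UValTy n) (UValTy n)))
    (.caseOf (.var 0) (omegaTm (.prod (UValTy n) (UValTy n)))
      (.caseOf (.var 0) (omegaTm (.prod (UValTy n) (UValTy n)))
        (.caseOf (.var 0) (.var 0) (omegaTm (.prod (UValTy n) (UValTy n)))))))

def caseSumU (n : ℕ) : STm :=
  .lam (UValTy (n+1)) (.caseOf (.var 0) (omegaTm (.sum (UValTy n) (UValTy n)))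
    (.caseOf (.var 0) (omegaTm (.sum (UValTy n) (UValTy n)))
      (.caseOf (.var 0) (omegaTm (.sum (UValTy n) (UValTy n)))
        (.caseOf (.var 0) (omegaTm (.sum (UValTy n) (UValTy n)))
          (.caseOf (.var 0) (.var 0) (omegaTm (.sum (UValTy n) (UValTy n))))))))

/-- `caseUVal_{→;n} : UVal_{n+1} → UVal_n → UVal_n` -/
def caseArrU (n : ℕ) : STm :=
  .lam (UValTy (n+1)) (.lam (UValTy n)
    (.caseOf (.var 1) (omegaTm (UValTy n))
      (.caseOf (.var 0) (omegaTm (UValTy n))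
        (.caseOf (.var 0) (omegaTm (UValTy n))
          (.caseOf (.var 0) (omegaTm (UValTy n))
            (.caseOf (.var 0) (omegaTm (UValTy n))
              (.app (.var 0) (.var 5))))))))

/-- `updown d true n = upgrade_{n;d} : UVal_n → UVal_{n+d}`,
    `updown d false n = downgrade_{n;d} : UVal_{n+d} → UVal_n`. -/
def updown (d : ℕ) : Bool → ℕ → STm
  | up, 0 => if up then .lam (UValTy 0) (unkUVal d) else .lam (UValTy d) (unkUVal 0)
  | up, n+1 =>
    let sm := updown d up n
    let op := updown d (!up) n
    let aTy := if up then UValTy (n+1) else UValTy (n+d+1)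
    let zTy := if up then UValTy (n+d) else UValTy n
    .lam aTy (.caseOf (.var 0) inUnk
      (.caseOf (.var 0) (inUnit (.var 0))
        (.caseOf (.var 0) (inBool (.var 0))
          (.caseOf (.var 0)
            (inProd (.pair (.app sm (.p1 (.var 0))) (.app sm (.p2 (.var 0)))))
            (.caseOf (.var 0)
              (inSum (.caseOf (.var 0) (.inl (.app sm (.var 0))) (.inr (.app sm (.var 0)))))
              (inArr (.lam zTy (.app sm (.app (.var 1) (.app op (.var 0)))))))))))

def upgrade (n d : ℕ) : STm := updown d true n
def downgrade (n d : ℕ) : STm := updown d false n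

/-! ## inject / extract -/

/-- `(injext n τ).1 = inject_{τ;n} : τ → UVal_n` and
    `(injext n τ).2 = extract_{τ;n} : UVal_n → τ`. -/
def injext : ℕ → Ty → STm × STm
  | 0, τ => (.lam τ (omegaTm (UValTy 0)), .lam (UValTy 0) (omegaTm τ))
  | n+1, τ =>
    match τ with
    | .unit => (.lam .unit (inUnit (.var 0)), caseUnitU n)
    | .bool => (.lam .bool (inBool (.var 0)), caseBoolU n)
    | .prod a b =>
      (.lam (.prod a b) (inProd (.pair
          (.app (injext n a).1 (.p1 (.var 0)))
          (.app (injext n b).1 (.p2 (.var 0))))),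
       .lam (UValTy (n+1)) (.pair
          (.app (injext n a).2 (.p1 (.app (caseProdU n) (.var 0))))
          (.app (injext n b).2 (.p2 (.app (caseProdU n) (.var 0))))))
    | .sum a b =>
      (.lam (.sum a b) (inSum (.caseOf (.var 0)
          (.inl (.app (injext n a).1 (.var 0)))
          (.inr (.app (injext n b).1 (.var 0))))),
       .lam (UValTy (n+1)) (.caseOf (.app (caseSumU n) (.var 0))
          (.inl (.app (injext n a).2 (.var 0)))
          (.inr (.app (injext n b).2 (.var 0)))))
    | .arr a b =>
      (.lam (.arr a b) (inArr (.lam (UValTy n)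
          (.app (injext n b).1 (.app (.var 1) (.app (injext n a).2 (.var 0)))))),
       .lam (UValTy (n+1)) (.lam a
          (.app (injext n b).2
            (.app (.app (caseArrU n) (.var 1)) (.app (injext n a).1 (.var 0))))))

def injectTm (n : ℕ) (τ : Ty) : STm := (injext n τ).1
def extractTm (n : ℕ) (τ : Ty) : STm := (injext n τ).2

end FAC
/-! ## Emulation of λu terms in UVal_n -/

namespace FAC

/-- `emulate n t̲` : the approximate back-translation of a λu term into a λτ term
of type `UVal_n`. -/
def emulate (n : ℕ) : UTm → STm
  | .var i => .var i
  | .unit => .app (downgrade n 1) (inUnit .unit)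
  | .tt => .app (downgrade n 1) (inBool .tt)
  | .ff => .app (downgrade n 1) (inBool .ff)
  | .lam t => .app (downgrade n 1) (inArr (.lam (UValTy n) (emulate n t)))
  | .app t₁ t₂ =>
      .app (.app (caseArrU n) (.app (upgrade n 1) (emulate n t₁))) (emulate n t₂)
  | .pair t₁ t₂ => .app (downgrade n 1) (inProd (.pair (emulate n t₁) (emulate n t₂)))
  | .p1 t => .p1 (.app (caseProdU n) (.app (upgrade n 1) (emulate n t)))
  | .p2 t => .p2 (.app (caseProdU n) (.app (upgrade n 1) (emulate n t)))
  | .inl t => .app (downgrade n 1) (inSum (.inl (emulate n t)))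
  | .inr t => .app (downgrade n 1) (inSum (.inr (emulate n t)))
  | .caseOf t t₁ t₂ =>
      .caseOf (.app (caseSumU n) (.app (upgrade n 1) (emulate n t)))
        (emulate n t₁) (emulate n t₂)
  | .seq t₁ t₂ => .seq (.app (caseUnitU n) (.app (upgrade n 1) (emulate n t₁))) (emulate n t₂)
  | .tif t t₁ t₂ =>
      .tif (.app (caseBoolU n) (.app (upgrade n 1) (emulate n t)))
        (emulate n t₁) (emulate n t₂)
  | .wrong => omegaTm (UValTy n)

/-! ## Pseudo-types -/

inductive Prec : Type
  | precise | imprecise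
deriving DecidableEq

/-- pseudo-types: λτ types together with the token type `EmulDV_{n;p}` -/
inductive PTy : Type
  | unit : PTy
  | bool : PTy
  | arr (a b : PTy) : PTy
  | prod (a b : PTy) : PTy
  | sum (a b : PTy) : PTy
  | emul (n : ℕ) (p : Prec) : PTy
deriving DecidableEq

/-- conversion of pseudo-types to λτ types: `EmulDV_{n;p}` becomes `UVal_n` -/
def repEmul : PTy → Ty
  | .unit => .unit
  | .bool => .bool
  | .arr a b => .arr (repEmul a) (repEmul b)
  | .prod a b => .prod (repEmul a) (repEmul b)
  | .sum a b => .sum (repEmul a) (repEmul b)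
  | .emul n _ => UValTy n

/-- embedding of λτ types into pseudo-types -/
def Ty.toP : Ty → PTy
  | .unit => .unit
  | .bool => .bool
  | .arr a b => .arr a.toP b.toP
  | .prod a b => .prod a.toP b.toP
  | .sum a b => .sum a.toP b.toP

def PTy.weight : PTy → ℕ
  | .unit => 1
  | .bool => 1
  | .arr a b => a.weight + b.weight + 1
  | .prod a b => a.weight + b.weight + 1
  | .sum a b => a.weight + b.weight + 1
  | .emul n _ => 2 * 3 ^ n

/-! ## Evaluation contexts -/

inductive SEC : Type
  | hole
  | appL (C : SEC) (t : STm)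
  | appR (v : STm) (C : SEC)
  | pairL (C : SEC) (t : STm)
  | pairR (v : STm) (C : SEC)
  | p1 (C : SEC)
  | p2 (C : SEC)
  | inl (C : SEC)
  | inr (C : SEC)
  | caseOf (C : SEC) (t₁ t₂ : STm)
  | seq (C : SEC) (t : STm)
  | tif (C : SEC) (t₁ t₂ : STm)
  | fixt (a b : Ty) (C : SEC)

def SEC.ok : SEC → Prop
  | .hole => True
  | .appL C _ => C.ok
  | .appR v C => SIsVal v ∧ C.ok
  | .pairL C _ => C.ok
  | .pairR v C => SIsVal v ∧ C.ok
  | .p1 C => C.ok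
  | .p2 C => C.ok
  | .inl C => C.ok
  | .inr C => C.ok
  | .caseOf C _ _ => C.ok
  | .seq C _ => C.ok
  | .tif C _ _ => C.ok
  | .fixt _ _ C => C.ok

def SEC.plug : SEC → STm → STm
  | .hole, t => t
  | .appL C u, t => .app (C.plug t) u
  | .appR v C, t => .app v (C.plug t)
  | .pairL C u, t => .pair (C.plug t) u
  | .pairR v C, t => .pair v (C.plug t)
  | .p1 C, t => .p1 (C.plug t)
  | .p2 C, t => .p2 (C.plug t)
  | .inl C, t => .inl (C.plug t)
  | .inr C, t => .inr (C.plug t)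
  | .caseOf C a b, t => .caseOf (C.plug t) a b
  | .seq C u, t => .seq (C.plug t) u
  | .tif C a b, t => .tif (C.plug t) a b
  | .fixt a b C, t => .fixt a b (C.plug t)

inductive UEC : Type
  | hole
  | appL (C : UEC) (t : UTm)
  | appR (v : UTm) (C : UEC)
  | pairL (C : UEC) (t : UTm)
  | pairR (v : UTm) (C : UEC)
  | p1 (C : UEC)
  | p2 (C : UEC)
  | inl (C : UEC)
  | inr (C : UEC)
  | caseOf (C : UEC) (t₁ t₂ : UTm)
  | seq (C : UEC) (t : UTm)
  | tif (C : UEC) (t₁ t₂ : UTm)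

def UEC.ok : UEC → Prop
  | .hole => True
  | .appL C _ => C.ok
  | .appR v C => UIsVal v ∧ C.ok
  | .pairL C _ => C.ok
  | .pairR v C => UIsVal v ∧ C.ok
  | .p1 C => C.ok
  | .p2 C => C.ok
  | .inl C => C.ok
  | .inr C => C.ok
  | .caseOf C _ _ => C.ok
  | .seq C _ => C.ok
  | .tif C _ _ => C.ok

def UEC.plug : UEC → UTm → UTm
  | .hole, t => t
  | .appL C u, t => .app (C.plug t) u
  | .appR v C, t => .app v (C.plug t)
  | .pairL C u, t => .pair (C.plug t) u
  | .pairR v C, t => .pair v (C.plug t)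
  | .p1 C, t => .p1 (C.plug t)
  | .p2 C, t => .p2 (C.plug t)
  | .inl C, t => .inl (C.plug t)
  | .inr C, t => .inr (C.plug t)
  | .caseOf C a b, t => .caseOf (C.plug t) a b
  | .seq C u, t => .seq (C.plug t) u
  | .tif C a b, t => .tif (C.plug t) a b

end FAC
/-! ## The step-indexed, asymmetric, cross-language logical relations -/

namespace FAC

/-- direction of approximation: `lt` is ≲ and `gt` is ≳ -/
inductive Dir : Type
  | lt | gt
deriving DecidableEq

/-- the observation relation `O(W)_□` on worlds `W = (k)` -/
def Obs (dir : Dir) (k : ℕ) (ts : STm) (tu : UTm) : Prop :=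
  match dir with
  | .lt => (∃ m ≤ k, ∃ v, SStepN m ts v ∧ SIsVal v) → UHalts tu
  | .gt => (∃ m ≤ k, ∃ v, UStepN m tu v ∧ UIsVal v) → SHalts ts

/-- The value relation `(W, vs, vu) ∈ V⟦τ̂⟧_dir`, defined by well-founded
recursion on the lexicographic pair (world level, weight of the pseudo-type).
The term and continuation relations of the biorthogonal definition are
inlined at the recursive occurrences. -/
def ValRel (dir : Dir) (k : ℕ) (τ : PTy) (vs : STm) (vu : UTm) : Prop :=
  match τ with
  | .unit => HasTy [] vs .unit ∧ vu.ws 0 ∧ vs = .unit ∧ vu = .unit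
  | .bool => HasTy [] vs .bool ∧ vu.ws 0 ∧
      ((vs = .tt ∧ vu = .tt) ∨ (vs = .ff ∧ vu = .ff))
  | .prod a b =>
      HasTy [] vs (repEmul (.prod a b)) ∧ vu.ws 0 ∧
      ∃ v₁ v₂ u₁ u₂, vs = .pair v₁ v₂ ∧ vu = .pair u₁ u₂ ∧
        SIsVal v₁ ∧ SIsVal v₂ ∧ UIsVal u₁ ∧ UIsVal u₂ ∧
        (∀ j, j + 1 ≤ k → ValRel dir j a v₁ u₁ ∧ ValRel dir j b v₂ u₂)
  | .sum a b =>
      HasTy [] vs (repEmul (.sum a b)) ∧ vu.ws 0 ∧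
      ((∃ v u, vs = .inl v ∧ vu = .inl u ∧ SIsVal v ∧ UIsVal u ∧
          (∀ j, j + 1 ≤ k → ValRel dir j a v u)) ∨
       (∃ v u, vs = .inr v ∧ vu = .inr u ∧ SIsVal v ∧ UIsVal u ∧
          (∀ j, j + 1 ≤ k → ValRel dir j b v u)))
  | .arr a b =>
      HasTy [] vs (repEmul (.arr a b)) ∧ vu.ws 0 ∧
      ∃ ts tu, vs = .lam (repEmul a) ts ∧ vu = .lam tu ∧
        ∀ j, j < k → ∀ vs' vu', SIsVal vs' → UIsVal vu' → ValRel dir j a vs' vu' →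
          -- inlined term relation at type b, world j
          ∀ Cs Cu, SEC.ok Cs → UEC.ok Cu →
            (∀ i, i ≤ j → ∀ ws wu, SIsVal ws → UIsVal wu → ValRel dir i b ws wu →
              Obs dir i (Cs.plug ws) (Cu.plug wu)) →
            Obs dir j (Cs.plug (ts.subst0 vs')) (Cu.plug (tu.subst0 vu'))
  | .emul 0 p => HasTy [] vs (UValTy 0) ∧ vu.ws 0 ∧ vs = .unit ∧ p = .imprecise
  | .emul (n+1) p =>
      HasTy [] vs (UValTy (n+1)) ∧ vu.ws 0 ∧
      ((vs = inUnk ∧ p = .imprecise) ∨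
       (∃ v, vs = inUnit v ∧ ValRel dir k .unit v vu) ∨
       (∃ v, vs = inBool v ∧ ValRel dir k .bool v vu) ∨
       (∃ v, vs = inProd v ∧ ValRel dir k (.prod (.emul n p) (.emul n p)) v vu) ∨
       (∃ v, vs = inSum v ∧ ValRel dir k (.sum (.emul n p) (.emul n p)) v vu) ∨
       (∃ v, vs = inArr v ∧ ValRel dir k (.arr (.emul n p) (.emul n p)) v vu))
termination_by (k, τ.weight)
decreasing_by
  all_goals simp_wf
  all_goals try (exact Prod.Lex.left _ _ (by omega))
  all_goals
    refine Prod.Lex.right _ ?_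
  all_goals simp [PTy.weight, pow_succ]
  all_goals nlinarith [Nat.one_le_two_pow (n := n), Nat.one_le_pow n 3 (by omega)]

end FAC
namespace FAC

/-- continuation (evaluation-context) relation: biorthogonality -/
def ContRel (dir : Dir) (k : ℕ) (τ : PTy) (Cs : SEC) (Cu : UEC) : Prop :=
  Cs.ok ∧ Cu.ok ∧
  ∀ i, i ≤ k → ∀ vs vu, SIsVal vs → UIsVal vu → ValRel dir i τ vs vu →
    Obs dir i (Cs.plug vs) (Cu.plug vu)

/-- term relation -/
def TermRel (dir : Dir) (k : ℕ) (τ : PTy) (t : STm) (u : UTm) : Prop :=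
  ∀ Cs Cu, ContRel dir k τ Cs Cu → Obs dir k (Cs.plug t) (Cu.plug u)

/-- relation on closing substitutions instantiating a pseudo-context -/
def EnvRel (dir : Dir) (k : ℕ) (Γ : List PTy) (γs : ℕ → STm) (γu : ℕ → UTm) : Prop :=
  ∀ i τ, Γ[i]? = some τ →
    SIsVal (γs i) ∧ UIsVal (γu i) ∧ ValRel dir k τ (γs i) (γu i)

/-- the logical relation `Γ̂ ⊢ t □ₙ t̲ : τ̂` on open terms, up to `n` steps -/
def LogRelN (dir : Dir) (n : ℕ) (Γ : List PTy) (t : STm) (u : UTm) (τ : PTy) : Prop :=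
  HasTy (Γ.map repEmul) t (repEmul τ) ∧ u.ws Γ.length ∧
  ∀ k, k ≤ n → ∀ γs γu, EnvRel dir k Γ γs γu →
    TermRel dir k τ (t.subst γs) (u.subst γu)

/-- `Γ̂ ⊢ t □ t̲ : τ̂` : related up to any number of steps -/
def LogRel (dir : Dir) (Γ : List PTy) (t : STm) (u : UTm) (τ : PTy) : Prop :=
  ∀ n, LogRelN dir n Γ t u τ

/-! ## Program contexts -/

inductive SPC : Type
  | hole
  | lam (τ : Ty) (C : SPC)
  | appL (C : SPC) (t : STm)
  | appR (t : STm) (C : SPC)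
  | pairL (C : SPC) (t : STm)
  | pairR (t : STm) (C : SPC)
  | p1 (C : SPC)
  | p2 (C : SPC)
  | inl (C : SPC)
  | inr (C : SPC)
  | caseS (C : SPC) (t₁ t₂ : STm)
  | caseL (t : STm) (C : SPC) (t₂ : STm)
  | caseR (t t₁ : STm) (C : SPC)
  | seqL (C : SPC) (t : STm)
  | seqR (t : STm) (C : SPC)
  | tifC (C : SPC) (t₁ t₂ : STm)
  | tifT (t : STm) (C : SPC) (t₂ : STm)
  | tifF (t t₁ : STm) (C : SPC)
  | fixt (a b : Ty) (C : SPC)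

def SPC.plug : SPC → STm → STm
  | .hole, t => t
  | .lam τ C, t => .lam τ (C.plug t)
  | .appL C u, t => .app (C.plug t) u
  | .appR u C, t => .app u (C.plug t)
  | .pairL C u, t => .pair (C.plug t) u
  | .pairR u C, t => .pair u (C.plug t)
  | .p1 C, t => .p1 (C.plug t)
  | .p2 C, t => .p2 (C.plug t)
  | .inl C, t => .inl (C.plug t)
  | .inr C, t => .inr (C.plug t)
  | .caseS C a b, t => .caseOf (C.plug t) a b
  | .caseL u C b, t => .caseOf u (C.plug t) b
  | .caseR u a C, t => .caseOf u a (C.plug t)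
  | .seqL C u, t => .seq (C.plug t) u
  | .seqR u C, t => .seq u (C.plug t)
  | .tifC C a b, t => .tif (C.plug t) a b
  | .tifT u C b, t => .tif u (C.plug t) b
  | .tifF u a C, t => .tif u a (C.plug t)
  | .fixt a b C, t => .fixt a b (C.plug t)

/-- context typing `⊢ C : (Γ',τ') → (Γ,τ)` -/
inductive SPCTy : SPC → List Ty → Ty → List Ty → Ty → Prop
  | hole {Γ τ} : SPCTy .hole Γ τ Γ τ
  | lam {C Γ' τ' Γ σ τ} : SPCTy C Γ' τ' (σ :: Γ) τ → SPCTy (.lam σ C) Γ' τ' Γ (.arr σ τ)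
  | appL {C Γ' τ' Γ a b t} : SPCTy C Γ' τ' Γ (.arr a b) → HasTy Γ t a →
      SPCTy (.appL C t) Γ' τ' Γ b
  | appR {C Γ' τ' Γ a b t} : HasTy Γ t (.arr a b) → SPCTy C Γ' τ' Γ a →
      SPCTy (.appR t C) Γ' τ' Γ b
  | pairL {C Γ' τ' Γ a b t} : SPCTy C Γ' τ' Γ a → HasTy Γ t b →
      SPCTy (.pairL C t) Γ' τ' Γ (.prod a b)
  | pairR {C Γ' τ' Γ a b t} : HasTy Γ t a → SPCTy C Γ' τ' Γ b →
      SPCTy (.pairR t C) Γ' τ' Γ (.prod a b)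
  | p1 {C Γ' τ' Γ a b} : SPCTy C Γ' τ' Γ (.prod a b) → SPCTy (.p1 C) Γ' τ' Γ a
  | p2 {C Γ' τ' Γ a b} : SPCTy C Γ' τ' Γ (.prod a b) → SPCTy (.p2 C) Γ' τ' Γ b
  | inl {C Γ' τ' Γ a b} : SPCTy C Γ' τ' Γ a → SPCTy (.inl C) Γ' τ' Γ (.sum a b)
  | inr {C Γ' τ' Γ a b} : SPCTy C Γ' τ' Γ b → SPCTy (.inr C) Γ' τ' Γ (.sum a b)
  | caseS {C Γ' τ' Γ a b τ t₁ t₂} : SPCTy C Γ' τ' Γ (.sum a b) →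
      HasTy (a :: Γ) t₁ τ → HasTy (b :: Γ) t₂ τ → SPCTy (.caseS C t₁ t₂) Γ' τ' Γ τ
  | caseL {C Γ' τ' Γ a b τ t t₂} : HasTy Γ t (.sum a b) →
      SPCTy C Γ' τ' (a :: Γ) τ → HasTy (b :: Γ) t₂ τ → SPCTy (.caseL t C t₂) Γ' τ' Γ τ
  | caseR {C Γ' τ' Γ a b τ t t₁} : HasTy Γ t (.sum a b) →
      HasTy (a :: Γ) t₁ τ → SPCTy C Γ' τ' (b :: Γ) τ → SPCTy (.caseR t t₁ C) Γ' τ' Γ τ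
  | seqL {C Γ' τ' Γ τ t} : SPCTy C Γ' τ' Γ .unit → HasTy Γ t τ →
      SPCTy (.seqL C t) Γ' τ' Γ τ
  | seqR {C Γ' τ' Γ τ t} : HasTy Γ t .unit → SPCTy C Γ' τ' Γ τ →
      SPCTy (.seqR t C) Γ' τ' Γ τ
  | tifC {C Γ' τ' Γ τ t₁ t₂} : SPCTy C Γ' τ' Γ .bool → HasTy Γ t₁ τ → HasTy Γ t₂ τ →
      SPCTy (.tifC C t₁ t₂) Γ' τ' Γ τ
  | tifT {C Γ' τ' Γ τ t t₂} : HasTy Γ t .bool → SPCTy C Γ' τ' Γ τ → HasTy Γ t₂ τ →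
      SPCTy (.tifT t C t₂) Γ' τ' Γ τ
  | tifF {C Γ' τ' Γ τ t t₁} : HasTy Γ t .bool → HasTy Γ t₁ τ → SPCTy C Γ' τ' Γ τ →
      SPCTy (.tifF t t₁ C) Γ' τ' Γ τ
  | fixt {C Γ' τ' Γ a b} : SPCTy C Γ' τ' Γ (.arr (.arr a b) (.arr a b)) →
      SPCTy (.fixt a b C) Γ' τ' Γ (.arr a b)

inductive UPC : Type
  | hole
  | lam (C : UPC)
  | appL (C : UPC) (t : UTm)
  | appR (t : UTm) (C : UPC)
  | pairL (C : UPC) (t : UTm)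
  | pairR (t : UTm) (C : UPC)
  | p1 (C : UPC)
  | p2 (C : UPC)
  | inl (C : UPC)
  | inr (C : UPC)
  | caseS (C : UPC) (t₁ t₂ : UTm)
  | caseL (t : UTm) (C : UPC) (t₂ : UTm)
  | caseR (t t₁ : UTm) (C : UPC)
  | seqL (C : UPC) (t : UTm)
  | seqR (t : UTm) (C : UPC)
  | tifC (C : UPC) (t₁ t₂ : UTm)
  | tifT (t : UTm) (C : UPC) (t₂ : UTm)
  | tifF (t t₁ : UTm) (C : UPC)

def UPC.plug : UPC → UTm → UTm
  | .hole, t => t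
  | .lam C, t => .lam (C.plug t)
  | .appL C u, t => .app (C.plug t) u
  | .appR u C, t => .app u (C.plug t)
  | .pairL C u, t => .pair (C.plug t) u
  | .pairR u C, t => .pair u (C.plug t)
  | .p1 C, t => .p1 (C.plug t)
  | .p2 C, t => .p2 (C.plug t)
  | .inl C, t => .inl (C.plug t)
  | .inr C, t => .inr (C.plug t)
  | .caseS C a b, t => .caseOf (C.plug t) a b
  | .caseL u C b, t => .caseOf u (C.plug t) b
  | .caseR u a C, t => .caseOf u a (C.plug t)
  | .seqL C u, t => .seq (C.plug t) u
  | .seqR u C, t => .seq u (C.plug t)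
  | .tifC C a b, t => .tif (C.plug t) a b
  | .tifT u C b, t => .tif u (C.plug t) b
  | .tifF u a C, t => .tif u a (C.plug t)

/-- `UPCWs C m n` : context `C` maps terms with `m` free variables (the hole's scope)
to terms with `n` free variables (`⊢ C : m → n`). -/
inductive UPCWs : UPC → ℕ → ℕ → Prop
  | hole {n} : UPCWs .hole n n
  | lam {C m n} : UPCWs C m (n+1) → UPCWs (.lam C) m n
  | appL {C m n t} : UPCWs C m n → UTm.ws t n → UPCWs (.appL C t) m n
  | appR {C m n t} : UTm.ws t n → UPCWs C m n → UPCWs (.appR t C) m n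
  | pairL {C m n t} : UPCWs C m n → UTm.ws t n → UPCWs (.pairL C t) m n
  | pairR {C m n t} : UTm.ws t n → UPCWs C m n → UPCWs (.pairR t C) m n
  | p1 {C m n} : UPCWs C m n → UPCWs (.p1 C) m n
  | p2 {C m n} : UPCWs C m n → UPCWs (.p2 C) m n
  | inl {C m n} : UPCWs C m n → UPCWs (.inl C) m n
  | inr {C m n} : UPCWs C m n → UPCWs (.inr C) m n
  | caseS {C m n t₁ t₂} : UPCWs C m n → UTm.ws t₁ (n+1) → UTm.ws t₂ (n+1) →
      UPCWs (.caseS C t₁ t₂) m n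
  | caseL {C m n t t₂} : UTm.ws t n → UPCWs C m (n+1) → UTm.ws t₂ (n+1) →
      UPCWs (.caseL t C t₂) m n
  | caseR {C m n t t₁} : UTm.ws t n → UTm.ws t₁ (n+1) → UPCWs C m (n+1) →
      UPCWs (.caseR t t₁ C) m n
  | seqL {C m n t} : UPCWs C m n → UTm.ws t n → UPCWs (.seqL C t) m n
  | seqR {C m n t} : UTm.ws t n → UPCWs C m n → UPCWs (.seqR t C) m n
  | tifC {C m n t₁ t₂} : UPCWs C m n → UTm.ws t₁ n → UTm.ws t₂ n →
      UPCWs (.tifC C t₁ t₂) m n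
  | tifT {C m n t t₂} : UTm.ws t n → UPCWs C m n → UTm.ws t₂ n →
      UPCWs (.tifT t C t₂) m n
  | tifF {C m n t t₁} : UTm.ws t n → UTm.ws t₁ n → UPCWs C m n →
      UPCWs (.tifF t t₁ C) m n

/-! ## Contextual equivalence -/

/-- `t₁ ≃ctx t₂ : τ` in λτ (for closed terms) -/
def SCtxEq (t₁ t₂ : STm) (τ : Ty) : Prop :=
  ∀ C τ', SPCTy C [] τ [] τ' → (SHalts (C.plug t₁) ↔ SHalts (C.plug t₂))

/-- `t̲₁ ≃ctx t̲₂` in λu (for closed terms) -/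
def UCtxEq (u₁ u₂ : UTm) : Prop :=
  ∀ C, UPCWs C 0 0 → (UHalts (C.plug u₁) ↔ UHalts (C.plug u₂))

/-! ## Emulation of λu program contexts -/

/-- `emulateC n C̲` : back-translation of a λu program context into a λτ program
context with hole of type `UVal_n`. -/
def emulateC (n : ℕ) : UPC → SPC
  | .hole => .hole
  | .lam C => .appR (downgrade n 1)
      (.inr (.inr (.inr (.inr (.inr (.lam (UValTy n) (emulateC n C)))))))
  | .appL C t => .appL (.appR (caseArrU n) (.appR (upgrade n 1) (emulateC n C))) (emulate n t)
  | .appR t C => .appR (.app (caseArrU n) (.app (upgrade n 1) (emulate n t))) (emulateC n C)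
  | .pairL C t => .appR (downgrade n 1)
      (.inr (.inr (.inr (.inl (.pairL (emulateC n C) (emulate n t))))))
  | .pairR t C => .appR (downgrade n 1)
      (.inr (.inr (.inr (.inl (.pairR (emulate n t) (emulateC n C))))))
  | .p1 C => .p1 (.appR (caseProdU n) (.appR (upgrade n 1) (emulateC n C)))
  | .p2 C => .p2 (.appR (caseProdU n) (.appR (upgrade n 1) (emulateC n C)))
  | .inl C => .appR (downgrade n 1) (.inr (.inr (.inr (.inr (.inl (.inl (emulateC n C)))))))
  | .inr C => .appR (downgrade n 1) (.inr (.inr (.inr (.inr (.inl (.inr (emulateC n C)))))))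
  | .caseS C t₁ t₂ => .caseS (.appR (caseSumU n) (.appR (upgrade n 1) (emulateC n C)))
      (emulate n t₁) (emulate n t₂)
  | .caseL t C t₂ => .caseL (.app (caseSumU n) (.app (upgrade n 1) (emulate n t)))
      (emulateC n C) (emulate n t₂)
  | .caseR t t₁ C => .caseR (.app (caseSumU n) (.app (upgrade n 1) (emulate n t)))
      (emulate n t₁) (emulateC n C)
  | .seqL C t => .seqL (.appR (caseUnitU n) (.appR (upgrade n 1) (emulateC n C))) (emulate n t)
  | .seqR t C => .seqR (.app (caseUnitU n) (.app (upgrade n 1) (emulate n t))) (emulateC n C)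
  | .tifC C t₁ t₂ => .tifC (.appR (caseBoolU n) (.appR (upgrade n 1) (emulateC n C)))
      (emulate n t₁) (emulate n t₂)
  | .tifT t C t₂ => .tifT (.app (caseBoolU n) (.app (upgrade n 1) (emulate n t)))
      (emulateC n C) (emulate n t₂)
  | .tifF t t₁ C => .tifF (.app (caseBoolU n) (.app (upgrade n 1) (emulate n t)))
      (emulate n t₁) (emulateC n C)

/-- the approximate back-translation `⟨⟨C̲⟩⟩_{τ;m} := emulate_{m+1}(C̲)[inject_{τ;m} ·]`,
as an operation plugging a λτ term into the back-translated context. -/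
def backtrPlug (τ : Ty) (m : ℕ) (C : UPC) (t : STm) : STm :=
  (emulateC (m+1) C).plug (.app (injectTm m τ) t)

end FAC

/-! Each typing rule of λτ has a compatibility lemma for the logical relation, stated for
arbitrary related λu terms, and the theorem follows by induction on the typing derivation.
Because the term relation is biorthogonal, an elimination form can be handled by first
evaluating its principal subterm in an extended evaluation context, and then matching one λτ
reduction step by at least one λu step, which pays for the decrease of the step index. The one
non-structural rule is `fix`: the Z combinator applied to `f` reduces in three steps to
`f (λy. g g y)` with `g = λx. f (λy. x x y)`, and this η-expanded recursive call is related to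
λτ's `λx. fix f x` at every smaller index by Löb (strong) induction on the index. -/

namespace FAC

theorem liftR_comp (f g : ℕ → ℕ) : liftR g ∘ liftR f = liftR (g ∘ f) := by
  funext n; cases n <;> rfl

theorem STm.rename_rename (t : STm) (f g : ℕ → ℕ) :
    (t.rename f).rename g = t.rename (g ∘ f) := by
  induction t generalizing f g <;> simp [STm.rename, liftR_comp, *]

theorem UTm.rename_rename (t : UTm) (f g : ℕ → ℕ) :
    (t.rename f).rename g = t.rename (g ∘ f) := by
  induction t generalizing f g <;> simp [UTm.rename, liftR_comp, *]

theorem liftS_comp_liftR (σ : ℕ → STm) (f : ℕ → ℕ) : liftS σ ∘ liftR f = liftS (σ ∘ f) := by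
  funext n; cases n <;> rfl

theorem liftU_comp_liftR (σ : ℕ → UTm) (f : ℕ → ℕ) : liftU σ ∘ liftR f = liftU (σ ∘ f) := by
  funext n; cases n <;> rfl

theorem STm.subst_rename (t : STm) (f : ℕ → ℕ) (σ : ℕ → STm) :
    (t.rename f).subst σ = t.subst (σ ∘ f) := by
  induction t generalizing f σ <;> simp [STm.rename, STm.subst, liftS_comp_liftR, *]

theorem UTm.subst_rename (t : UTm) (f : ℕ → ℕ) (σ : ℕ → UTm) :
    (t.rename f).subst σ = t.subst (σ ∘ f) := by
  induction t generalizing f σ <;> simp [UTm.rename, UTm.subst, liftU_comp_liftR, *]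

theorem rename_liftR_comp_liftS (σ : ℕ → STm) (f : ℕ → ℕ) :
    STm.rename (liftR f) ∘ liftS σ = liftS (STm.rename f ∘ σ) := by
  funext n
  cases n with
  | zero => rfl
  | succ n => exact (STm.rename_rename _ _ _).trans (STm.rename_rename (σ n) f Nat.succ).symm

theorem rename_liftR_comp_liftU (σ : ℕ → UTm) (f : ℕ → ℕ) :
    UTm.rename (liftR f) ∘ liftU σ = liftU (UTm.rename f ∘ σ) := by
  funext n
  cases n with
  | zero => rfl
  | succ n => exact (UTm.rename_rename _ _ _).trans (UTm.rename_rename (σ n) f Nat.succ).symm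

theorem STm.rename_subst (t : STm) (σ : ℕ → STm) (f : ℕ → ℕ) :
    (t.subst σ).rename f = t.subst (STm.rename f ∘ σ) := by
  induction t generalizing σ f <;> simp [STm.rename, STm.subst, rename_liftR_comp_liftS, *]

theorem UTm.rename_subst (t : UTm) (σ : ℕ → UTm) (f : ℕ → ℕ) :
    (t.subst σ).rename f = t.subst (UTm.rename f ∘ σ) := by
  induction t generalizing σ f <;> simp [UTm.rename, UTm.subst, rename_liftR_comp_liftU, *]

theorem subst_liftS_comp_liftS (σ τ : ℕ → STm) :
    STm.subst (liftS τ) ∘ liftS σ = liftS (STm.subst τ ∘ σ) := by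
  funext n; cases n
  · rfl
  · exact (STm.subst_rename _ _ _).trans (STm.rename_subst _ _ _).symm

theorem subst_liftU_comp_liftU (σ τ : ℕ → UTm) :
    UTm.subst (liftU τ) ∘ liftU σ = liftU (UTm.subst τ ∘ σ) := by
  funext n; cases n
  · rfl
  · exact (UTm.subst_rename _ _ _).trans (UTm.rename_subst _ _ _).symm

theorem STm.subst_subst (t : STm) (σ τ : ℕ → STm) :
    (t.subst σ).subst τ = t.subst (STm.subst τ ∘ σ) := by
  induction t generalizing σ τ <;> simp [STm.subst, subst_liftS_comp_liftS, *]

theorem UTm.subst_subst (t : UTm) (σ τ : ℕ → UTm) :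
    (t.subst σ).subst τ = t.subst (UTm.subst τ ∘ σ) := by
  induction t generalizing σ τ <;> simp [UTm.subst, subst_liftU_comp_liftU, *]

theorem liftS_var : liftS STm.var = STm.var := by
  funext n; cases n <;> rfl

theorem liftU_var : liftU UTm.var = UTm.var := by
  funext n; cases n <;> rfl

theorem STm.subst_var (t : STm) : t.subst STm.var = t := by
  induction t <;> simp [STm.subst, liftS_var, *]

theorem UTm.subst_var (t : UTm) : t.subst UTm.var = t := by
  induction t <;> simp [UTm.subst, liftU_var, *]

theorem STm.rename_succ_subst0 (t v : STm) : (t.rename Nat.succ).subst0 v = t := by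
  rw [STm.subst0, STm.subst_rename]
  exact t.subst_var

theorem UTm.rename_succ_subst0 (t v : UTm) : (t.rename Nat.succ).subst0 v = t := by
  rw [UTm.subst0, UTm.subst_rename]
  exact t.subst_var

def scons {α : Type} (a : α) (σ : ℕ → α) : ℕ → α
  | 0 => a
  | n + 1 => σ n

theorem STm.subst_liftS_subst0 (t : STm) (σ : ℕ → STm) (v : STm) :
    (t.subst (liftS σ)).subst0 v = t.subst (scons v σ) := by
  rw [STm.subst0, STm.subst_subst]
  congr 1; funext n; cases n
  · rfl
  · exact STm.rename_succ_subst0 _ _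

theorem UTm.subst_liftU_subst0 (t : UTm) (σ : ℕ → UTm) (v : UTm) :
    (t.subst (liftU σ)).subst0 v = t.subst (scons v σ) := by
  rw [UTm.subst0, UTm.subst_subst]
  congr 1; funext n; cases n
  · rfl
  · exact UTm.rename_succ_subst0 _ _

theorem liftR_lt {f : ℕ → ℕ} {n m : ℕ} (hf : ∀ i < n, f i < m) : ∀ i < n + 1, liftR f i < m + 1
  | 0, _ => Nat.succ_pos m
  | i + 1, hi => Nat.succ_lt_succ (hf i (Nat.lt_of_succ_lt_succ hi))

theorem UTm.ws_rename (t : UTm) {n m : ℕ} {f : ℕ → ℕ} (ht : t.ws n)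
    (hf : ∀ i < n, f i < m) : (t.rename f).ws m := by
  induction t generalizing n m f <;> simp only [UTm.ws, UTm.rename] at ht ⊢ <;>
    (try casesm* _ ∧ _) <;> (repeat' apply And.intro) <;> solve_by_elim [liftR_lt]

theorem liftU_ws {σ : ℕ → UTm} {n m : ℕ} (hσ : ∀ i < n, (σ i).ws m) :
    ∀ i < n + 1, (liftU σ i).ws (m + 1)
  | 0, _ => Nat.succ_pos m
  | i + 1, hi => UTm.ws_rename _ (hσ i (by omega)) fun _ => Nat.succ_lt_succ

theorem UTm.ws_subst (t : UTm) {n m : ℕ} {σ : ℕ → UTm} (ht : t.ws n)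
    (hσ : ∀ i < n, (σ i).ws m) : (t.subst σ).ws m := by
  induction t generalizing n m σ <;> simp only [UTm.ws, UTm.subst] at ht ⊢ <;>
    (try casesm* _ ∧ _) <;> (repeat' apply And.intro) <;> solve_by_elim [liftU_ws]

theorem getElem?_liftR {Γ Δ : List Ty} {f : ℕ → ℕ} (a : Ty)
    (hf : ∀ n τ, Γ[n]? = some τ → Δ[f n]? = some τ) :
    ∀ n τ, (a :: Γ)[n]? = some τ → (a :: Δ)[liftR f n]? = some τ
  | 0, _, h => h
  | n + 1, _, h => hf n _ h

theorem HasTy.rename {Γ Δ : List Ty} {t : STm} {τ : Ty} {f : ℕ → ℕ} (ht : HasTy Γ t τ)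
    (hf : ∀ n τ', Γ[n]? = some τ' → Δ[f n]? = some τ') : HasTy Δ (t.rename f) τ := by
  induction ht generalizing Δ f <;> simp only [STm.rename] <;>
    constructor <;> solve_by_elim [getElem?_liftR]

theorem hasTy_liftS {Γ Δ : List Ty} {σ : ℕ → STm} (a : Ty)
    (hσ : ∀ n τ, Γ[n]? = some τ → HasTy Δ (σ n) τ) :
    ∀ n τ, (a :: Γ)[n]? = some τ → HasTy (a :: Δ) (liftS σ n) τ
  | 0, _, h => .var h
  | n + 1, _, h => (hσ n _ h).rename fun _ _ h' => h'

theorem HasTy.subst {Γ Δ : List Ty} {t : STm} {τ : Ty} {σ : ℕ → STm} (ht : HasTy Γ t τ)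
    (hσ : ∀ n τ', Γ[n]? = some τ' → HasTy Δ (σ n) τ') : HasTy Δ (t.subst σ) τ := by
  induction ht generalizing Δ σ <;> simp only [STm.subst] <;>
    first | exact hσ _ _ ‹_› | constructor <;> solve_by_elim [hasTy_liftS]

theorem SIsVal.not_step {v t : STm} (hv : SIsVal v) : ¬ SStep v t := by
  induction hv generalizing t <;> intro h <;> cases h <;> solve_by_elim

theorem UIsVal.not_step {v t : UTm} (hv : UIsVal v) : ¬ UStep v t := by
  induction hv generalizing t <;> intro h <;> cases h <;>
    first | solve_by_elim | cases ‹UIsVal .wrong›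

theorem SStep.det {t a b : STm} (ha : SStep t a) (hb : SStep t b) : a = b := by
  induction ha generalizing b <;> cases hb <;>
    first
    | rfl
    | (congr 1; solve_by_elim only [*])
    | (exfalso; solve_by_elim only [SIsVal.not_step, SIsVal.lam, SIsVal.unit, SIsVal.tt,
        SIsVal.ff, SIsVal.pair, SIsVal.inl, SIsVal.inr, *])
    | exact absurd ‹SStep (.lam _ _) _› SIsVal.lam.not_step

theorem UStep.det {t a b : UTm} (ha : UStep t a) (hb : UStep t b) : a = b := by
  induction ha generalizing b <;> cases hb <;>
    first
    | rfl
    | cases ‹UIsVal .wrong›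
    | cases ‹UStep .wrong _›
    | (congr 1; solve_by_elim only [*])
    | (exfalso; solve_by_elim only [UIsVal.not_step, UIsVal.lam, UIsVal.unit, UIsVal.tt,
        UIsVal.ff, UIsVal.pair, UIsVal.inl, UIsVal.inr, *])

theorem UStepN.trans {m n : ℕ} {t₁ t₂ t₃ : UTm} (h₁ : UStepN m t₁ t₂) (h₂ : UStepN n t₂ t₃) :
    UStepN (m + n) t₁ t₃ := by
  induction m generalizing t₁ with
  | zero => cases h₁; simpa using h₂
  | succ m ih =>
    obtain ⟨t', hs, h₁⟩ := h₁
    rw [Nat.succ_add]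
    exact ⟨t', hs, ih h₁⟩

theorem SHalts.of_step {t t' : STm} (hs : SStep t t') (h : SHalts t') : SHalts t :=
  let ⟨n, v, hn, hv⟩ := h
  ⟨n + 1, v, ⟨t', hs, hn⟩, hv⟩

theorem UHalts.of_stepN {n : ℕ} {t t' : UTm} (hs : UStepN n t t') (h : UHalts t') : UHalts t :=
  let ⟨m, v, hm, hv⟩ := h
  ⟨n + m, v, hs.trans hm, hv⟩

theorem SStepN.of_step_of_isVal {m : ℕ} {t t' v : STm} (hs : SStep t t') (hv : SIsVal v)
    (h : SStepN m t v) : ∃ m', m = m' + 1 ∧ SStepN m' t' v := by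
  match m, h with
  | 0, rfl => exact absurd hs hv.not_step
  | m + 1, ⟨t'', hs', h⟩ => exact ⟨m, rfl, hs.det hs' ▸ h⟩

theorem UStepN.sub_of_isVal {i m : ℕ} {t t' v : UTm} (hi : UStepN i t t') (hv : UIsVal v)
    (h : UStepN m t v) : i ≤ m ∧ UStepN (m - i) t' v := by
  induction i generalizing t m with
  | zero => cases hi; simpa using h
  | succ i ih =>
    obtain ⟨t₁, hs, hi⟩ := hi
    match m, h with
    | 0, rfl => exact absurd hs hv.not_step
    | m + 1, ⟨t₂, hs', h⟩ =>
      obtain ⟨hle, h⟩ := ih hi (hs.det hs' ▸ h)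
      exact ⟨by omega, by simpa using h⟩

theorem SEC.plug_step {C : SEC} (hC : C.ok) {t t' : STm} (h : SStep t t') :
    SStep (C.plug t) (C.plug t') := by
  induction C <;> simp only [SEC.ok] at hC <;> simp only [SEC.plug] <;>
    first | exact h | constructor <;> solve_by_elim [And.left, And.right]

theorem UEC.plug_step {C : UEC} (hC : C.ok) {t t' : UTm} (h : UStep t t') :
    UStep (C.plug t) (C.plug t') := by
  induction C <;> simp only [UEC.ok] at hC <;> simp only [UEC.plug] <;>
    first | exact h | constructor <;> solve_by_elim [And.left, And.right]

theorem UStep.stepPlus {t t' : UTm} (h : UStep t t') : UStepPlus t t' :=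
  ⟨1, one_pos, t', h, rfl⟩

theorem UEC.plug_stepN {C : UEC} (hC : C.ok) {n : ℕ} {t t' : UTm} (h : UStepN n t t') :
    UStepN n (C.plug t) (C.plug t') := by
  induction n generalizing t with
  | zero => cases h; rfl
  | succ n ih =>
    obtain ⟨t₁, hs, h⟩ := h
    exact ⟨C.plug t₁, C.plug_step hC hs, ih h⟩

theorem UEC.plug_stepPlus {C : UEC} (hC : C.ok) {t t' : UTm} (h : UStepPlus t t') :
    UStepPlus (C.plug t) (C.plug t') :=
  let ⟨n, hn, h⟩ := h
  ⟨n, hn, C.plug_stepN hC h⟩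

def SEC.comp : SEC → SEC → SEC
  | .hole, D => D
  | .appL C u, D => .appL (C.comp D) u
  | .appR v C, D => .appR v (C.comp D)
  | .pairL C u, D => .pairL (C.comp D) u
  | .pairR v C, D => .pairR v (C.comp D)
  | .p1 C, D => .p1 (C.comp D)
  | .p2 C, D => .p2 (C.comp D)
  | .inl C, D => .inl (C.comp D)
  | .inr C, D => .inr (C.comp D)
  | .caseOf C a b, D => .caseOf (C.comp D) a b
  | .seq C u, D => .seq (C.comp D) u
  | .tif C a b, D => .tif (C.comp D) a b
  | .fixt a b C, D => .fixt a b (C.comp D)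

def UEC.comp : UEC → UEC → UEC
  | .hole, D => D
  | .appL C u, D => .appL (C.comp D) u
  | .appR v C, D => .appR v (C.comp D)
  | .pairL C u, D => .pairL (C.comp D) u
  | .pairR v C, D => .pairR v (C.comp D)
  | .p1 C, D => .p1 (C.comp D)
  | .p2 C, D => .p2 (C.comp D)
  | .inl C, D => .inl (C.comp D)
  | .inr C, D => .inr (C.comp D)
  | .caseOf C a b, D => .caseOf (C.comp D) a b
  | .seq C u, D => .seq (C.comp D) u
  | .tif C a b, D => .tif (C.comp D) a b

theorem SEC.comp_plug (C D : SEC) (t : STm) : (C.comp D).plug t = C.plug (D.plug t) := by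
  induction C <;> simp [SEC.comp, SEC.plug, *]

theorem UEC.comp_plug (C D : UEC) (t : UTm) : (C.comp D).plug t = C.plug (D.plug t) := by
  induction C <;> simp [UEC.comp, UEC.plug, *]

theorem SEC.comp_ok {C D : SEC} (hC : C.ok) (hD : D.ok) : (C.comp D).ok := by
  induction C <;> simp_all [SEC.comp, SEC.ok]

theorem UEC.comp_ok {C D : UEC} (hC : C.ok) (hD : D.ok) : (C.comp D).ok := by
  induction C <;> simp_all [UEC.comp, UEC.ok]

theorem Obs.of_steps {dir : Dir} {k : ℕ} {ts ts' : STm} {tu tu' : UTm}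
    (hs : SStep ts ts') (hu : UStepPlus tu tu') (h : ∀ j < k, Obs dir j ts' tu') :
    Obs dir k ts tu := by
  obtain ⟨n, hn, hu⟩ := hu
  cases dir with
  | lt =>
    rintro ⟨m, hm, v, hv, hval⟩
    obtain ⟨m', rfl, hv'⟩ := SStepN.of_step_of_isVal hs hval hv
    exact UHalts.of_stepN hu (h m' (by omega) ⟨m', le_rfl, v, hv', hval⟩)
  | gt =>
    rintro ⟨m, hm, v, hv, hval⟩
    obtain ⟨hnm, hv'⟩ := hu.sub_of_isVal hval hv
    exact SHalts.of_step hs (h (m - n) (by omega) ⟨m - n, le_rfl, v, hv', hval⟩)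

section

variable {dir : Dir} {j k : ℕ}

section

variable {vs : STm} {vu : UTm}

theorem valRel_unit_iff : ValRel dir k .unit vs vu ↔
    HasTy [] vs .unit ∧ vu.ws 0 ∧ vs = .unit ∧ vu = .unit := by
  rw [ValRel]

theorem valRel_bool_iff : ValRel dir k .bool vs vu ↔
    HasTy [] vs .bool ∧ vu.ws 0 ∧ ((vs = .tt ∧ vu = .tt) ∨ (vs = .ff ∧ vu = .ff)) := by
  rw [ValRel]

theorem valRel_prod_iff {a b : PTy} : ValRel dir k (.prod a b) vs vu ↔
    HasTy [] vs (repEmul (.prod a b)) ∧ vu.ws 0 ∧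
      ∃ v₁ v₂ u₁ u₂, vs = .pair v₁ v₂ ∧ vu = .pair u₁ u₂ ∧
        SIsVal v₁ ∧ SIsVal v₂ ∧ UIsVal u₁ ∧ UIsVal u₂ ∧
        ∀ j, j + 1 ≤ k → ValRel dir j a v₁ u₁ ∧ ValRel dir j b v₂ u₂ := by
  rw [ValRel]

theorem valRel_sum_iff {a b : PTy} : ValRel dir k (.sum a b) vs vu ↔
    HasTy [] vs (repEmul (.sum a b)) ∧ vu.ws 0 ∧
      ((∃ v u, vs = .inl v ∧ vu = .inl u ∧ SIsVal v ∧ UIsVal u ∧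
          ∀ j, j + 1 ≤ k → ValRel dir j a v u) ∨
       (∃ v u, vs = .inr v ∧ vu = .inr u ∧ SIsVal v ∧ UIsVal u ∧
          ∀ j, j + 1 ≤ k → ValRel dir j b v u)) := by
  rw [ValRel]

theorem valRel_arr_iff {a b : PTy} : ValRel dir k (.arr a b) vs vu ↔
    HasTy [] vs (repEmul (.arr a b)) ∧ vu.ws 0 ∧
      ∃ ts tu, vs = .lam (repEmul a) ts ∧ vu = .lam tu ∧
        ∀ j < k, ∀ vs' vu', SIsVal vs' → UIsVal vu' → ValRel dir j a vs' vu' →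
          TermRel dir j b (ts.subst0 vs') (tu.subst0 vu') := by
  rw [ValRel]
  simp only [TermRel, ContRel, and_imp]

theorem ValRel.hasTy {τ : PTy} (h : ValRel dir k τ vs vu) : HasTy [] vs (repEmul τ) := by
  rcases τ with _ | _ | _ | _ | _ | ⟨_ | _, _⟩ <;> rw [ValRel] at h <;> exact h.1

theorem ValRel.ws {τ : PTy} (h : ValRel dir k τ vs vu) : vu.ws 0 := by
  rcases τ with _ | _ | _ | _ | _ | ⟨_ | _, _⟩ <;> rw [ValRel] at h <;> exact h.2.1

end

theorem ValRel.mono (hjk : j ≤ k) : ∀ {τ : PTy} {vs : STm} {vu : UTm},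
    ValRel dir k τ vs vu → ValRel dir j τ vs vu
  | .unit, _, _, h => valRel_unit_iff.mpr (valRel_unit_iff.mp h)
  | .bool, _, _, h => valRel_bool_iff.mpr (valRel_bool_iff.mp h)
  | .prod _ _, _, _, h => by
    obtain ⟨hty, hws, v₁, v₂, u₁, u₂, e₁, e₂, hv₁, hv₂, hu₁, hu₂, hrec⟩ := valRel_prod_iff.mp h
    exact valRel_prod_iff.mpr ⟨hty, hws, v₁, v₂, u₁, u₂, e₁, e₂, hv₁, hv₂, hu₁, hu₂,
      fun i hi => hrec i (by omega)⟩
  | .sum _ _, _, _, h => by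
    obtain ⟨hty, hws, ⟨v, u, e₁, e₂, hv, hu, hrec⟩ | ⟨v, u, e₁, e₂, hv, hu, hrec⟩⟩ :=
      valRel_sum_iff.mp h
    · exact valRel_sum_iff.mpr
        ⟨hty, hws, .inl ⟨v, u, e₁, e₂, hv, hu, fun i hi => hrec i (by omega)⟩⟩
    · exact valRel_sum_iff.mpr
        ⟨hty, hws, .inr ⟨v, u, e₁, e₂, hv, hu, fun i hi => hrec i (by omega)⟩⟩
  | .arr _ _, _, _, h => by
    obtain ⟨hty, hws, ts, tu, e₁, e₂, hbody⟩ := valRel_arr_iff.mp h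
    exact valRel_arr_iff.mpr ⟨hty, hws, ts, tu, e₁, e₂, fun i hi => hbody i (by omega)⟩
  | .emul 0 _, _, _, h => by rw [ValRel] at h ⊢; exact h
  | .emul (n + 1) p, _, _, h => by
    rw [ValRel] at h ⊢
    obtain ⟨hty, hws, h⟩ := h
    refine ⟨hty, hws, ?_⟩
    rcases h with h | ⟨v, e, h⟩ | ⟨v, e, h⟩ | ⟨v, e, h⟩ | ⟨v, e, h⟩ | ⟨v, e, h⟩
    exacts [.inl h, .inr (.inl ⟨v, e, ValRel.mono hjk h⟩),
      .inr (.inr (.inl ⟨v, e, ValRel.mono hjk h⟩)),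
      .inr (.inr (.inr (.inl ⟨v, e, ValRel.mono hjk h⟩))),
      .inr (.inr (.inr (.inr (.inl ⟨v, e, ValRel.mono hjk h⟩)))),
      .inr (.inr (.inr (.inr (.inr ⟨v, e, ValRel.mono hjk h⟩))))]
termination_by τ => τ.weight
decreasing_by
  all_goals simp only [PTy.weight, pow_succ]
  all_goals have := Nat.one_le_pow n 3 (by norm_num)
  all_goals omega

theorem ContRel.mono {τ : PTy} {Cs : SEC} {Cu : UEC} (h : ContRel dir k τ Cs Cu) (hjk : j ≤ k) :
    ContRel dir j τ Cs Cu :=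
  ⟨h.1, h.2.1, fun i hi => h.2.2 i (hi.trans hjk)⟩

theorem ValRel.termRel {τ : PTy} {vs : STm} {vu : UTm} (hvs : SIsVal vs) (hvu : UIsVal vu)
    (h : ValRel dir k τ vs vu) : TermRel dir k τ vs vu :=
  fun _ _ hK => hK.2.2 k le_rfl vs vu hvs hvu h

theorem TermRel.bind {τ τ' : PTy} {ts : STm} {tu : UTm} {Ds : SEC} {Du : UEC}
    (h : TermRel dir k τ ts tu) (hDs : Ds.ok) (hDu : Du.ok)
    (hD : ∀ i ≤ k, ∀ vs vu, SIsVal vs → UIsVal vu → ValRel dir i τ vs vu →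
      TermRel dir i τ' (Ds.plug vs) (Du.plug vu)) :
    TermRel dir k τ' (Ds.plug ts) (Du.plug tu) := by
  intro Cs Cu hK
  have hK' : ContRel dir k τ (Cs.comp Ds) (Cu.comp Du) :=
    ⟨SEC.comp_ok hK.1 hDs, UEC.comp_ok hK.2.1 hDu, fun i hi vs vu hvs hvu hv => by
      rw [SEC.comp_plug, UEC.comp_plug]
      exact hD i hi vs vu hvs hvu hv Cs Cu (hK.mono hi)⟩
  simpa only [SEC.comp_plug, UEC.comp_plug] using h _ _ hK'

theorem TermRel.of_steps {τ : PTy} {ts ts' : STm} {tu tu' : UTm}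
    (hs : SStep ts ts') (hu : UStepPlus tu tu') (h : ∀ j < k, TermRel dir j τ ts' tu') :
    TermRel dir k τ ts tu :=
  fun Cs Cu hK => Obs.of_steps (Cs.plug_step hK.1 hs) (Cu.plug_stepPlus hK.2.1 hu)
    fun j hj => h j hj Cs Cu (hK.mono hj.le)

theorem ValRel.app {a b : PTy} {v₁ v₂ : STm} {w₁ w₂ : UTm} (h₁ : ValRel dir k (.arr a b) v₁ w₁)
    (hv₂ : SIsVal v₂) (hw₂ : UIsVal w₂) (h₂ : ValRel dir k a v₂ w₂) :
    TermRel dir k b (.app v₁ v₂) (.app w₁ w₂) := by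
  obtain ⟨-, -, ts, tu, rfl, rfl, hbody⟩ := valRel_arr_iff.mp h₁
  exact .of_steps (.beta hv₂) (UStep.beta hw₂).stepPlus
    fun j hj => hbody j hj v₂ w₂ hv₂ hw₂ (h₂.mono hj.le)

section

variable {Γ : List PTy} {γs : ℕ → STm} {γu : ℕ → UTm}

theorem EnvRel.mono (h : EnvRel dir k Γ γs γu) (hjk : j ≤ k) : EnvRel dir j Γ γs γu :=
  fun i τ hi => let ⟨hs, hu, hv⟩ := h i τ hi; ⟨hs, hu, hv.mono hjk⟩

theorem EnvRel.cons {τ : PTy} {vs : STm} {vu : UTm} (h : EnvRel dir k Γ γs γu)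
    (hvs : SIsVal vs) (hvu : UIsVal vu) (hv : ValRel dir k τ vs vu) :
    EnvRel dir k (τ :: Γ) (scons vs γs) (scons vu γu)
  | 0, _, hi => by cases hi; exact ⟨hvs, hvu, hv⟩
  | n + 1, _, hi => h n _ hi

theorem EnvRel.hasTy (h : EnvRel dir k Γ γs γu) :
    ∀ n τ, (Γ.map repEmul)[n]? = some τ → HasTy [] (γs n) τ := by
  intro n τ hn
  obtain ⟨τ', hτ', rfl⟩ := Option.map_eq_some_iff.mp (List.getElem?_map ▸ hn)
  exact (h n τ' hτ').2.2.hasTy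

theorem EnvRel.ws (h : EnvRel dir k Γ γs γu) : ∀ n < Γ.length, (γu n).ws 0 :=
  fun n hn => (h n Γ[n] (List.getElem?_eq_getElem hn)).2.2.ws

section

variable {t : STm} {u : UTm} {τ : PTy}

theorem LogRel.intro (hty : HasTy (Γ.map repEmul) t (repEmul τ)) (hws : u.ws Γ.length)
    (h : ∀ k γs γu, EnvRel dir k Γ γs γu → TermRel dir k τ (t.subst γs) (u.subst γu)) :
    LogRel dir Γ t u τ :=
  fun _ => ⟨hty, hws, fun k _ => h k⟩

theorem LogRel.hasTy (h : LogRel dir Γ t u τ) : HasTy (Γ.map repEmul) t (repEmul τ) := (h 0).1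

theorem LogRel.ws (h : LogRel dir Γ t u τ) : u.ws Γ.length := (h 0).2.1

theorem LogRel.termRel (h : LogRel dir Γ t u τ) (hγ : EnvRel dir k Γ γs γu) :
    TermRel dir k τ (t.subst γs) (u.subst γu) :=
  (h k).2.2 k le_rfl γs γu hγ

end

end

end

/-- The reduct of `Zcomb f` that reappears after one unfolding: `λy. gOf f (gOf f) y`. -/
def Zfix (f : UTm) : UTm :=
  .lam (.app (.app ((gOf f).rename Nat.succ) ((gOf f).rename Nat.succ)) (.var 0))

/-- The η-expanded recursive call `λx. fix f x` that `fix` substitutes into its body. -/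
def fixEta (a b : Ty) (f : STm) : STm :=
  .lam a (.app ((STm.fixt a b f).rename Nat.succ) (.var 0))

theorem UStep.zcomb {f : UTm} (hf : UIsVal f) : UStep (.app Zcomb f) (.app (gOf f) (gOf f)) :=
  .beta hf

theorem UStep.gOf_self (f : UTm) : UStep (.app (gOf f) (gOf f)) (.app f (Zfix f)) := by
  have h : UStep (.app (gOf f) (gOf f)) (.app ((f.rename Nat.succ).subst0 (gOf f)) (Zfix f)) :=
    .beta .lam
  rwa [UTm.rename_succ_subst0] at h

theorem UTm.ws_rename_succ {t : UTm} {n : ℕ} (h : t.ws n) : (t.rename Nat.succ).ws (n + 1) :=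
  t.ws_rename h fun _ => Nat.succ_lt_succ

theorem zfix_ws {f : UTm} (hf : f.ws 0) : (Zfix f).ws 0 :=
  have hg : (gOf f).ws 0 := ⟨UTm.ws_rename_succ hf, by simp [UTm.ws]⟩
  ⟨⟨UTm.ws_rename_succ hg, UTm.ws_rename_succ hg⟩, Nat.zero_lt_one⟩

section

variable {dir : Dir} {a b : PTy}

theorem ValRel.fixEta_zfix {i : ℕ} {tb : STm} {tu : UTm}
    (h : ValRel dir i (.arr (.arr a b) (.arr a b)) (.lam (repEmul (.arr a b)) tb) (.lam tu)) :
    ∀ j < i, ValRel dir j (.arr a b)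
      (fixEta (repEmul a) (repEmul b) (.lam (repEmul (.arr a b)) tb)) (Zfix (.lam tu)) := by
  intro j
  induction j using Nat.strong_induction_on with
  | _ j ih =>
  intro hj
  obtain ⟨hty, hws, _, _, ⟨⟩, ⟨⟩, hbody⟩ := valRel_arr_iff.mp h
  refine valRel_arr_iff.mpr ⟨.lam (.app ((HasTy.fixt hty).rename fun _ _ h => by simp at h)
    (.var rfl)), zfix_ws hws, _, _, rfl, rfl, fun j' hj' v w hv hw hrel => ?_⟩
  show TermRel dir j' b (.app (((STm.fixt _ _ _).rename Nat.succ).subst0 v) v)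
    (.app (.app (((gOf _).rename Nat.succ).subst0 w) (((gOf _).rename Nat.succ).subst0 w)) w)
  simp only [STm.rename_succ_subst0, UTm.rename_succ_subst0]
  refine .of_steps (.app1 .fixBeta)
    ⟨2, two_pos, _, .app1 (.gOf_self _), _, .app1 (.beta .lam), rfl⟩ fun j'' hj'' => ?_
  exact (hbody j'' (by omega) _ _ .lam .lam (ih j'' (by omega) (by omega))).bind
    (Ds := .appL .hole v) (Du := .appL .hole w) trivial trivial
    fun _ _ _ _ _ _ hrel' => hrel'.app hv hw (hrel.mono (by omega))

theorem ValRel.fixt {k : ℕ} {vs : STm} {vu : UTm}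
    (h : ValRel dir k (.arr (.arr a b) (.arr a b)) vs vu) :
    TermRel dir k (.arr a b) (.fixt (repEmul a) (repEmul b) vs) (.app Zcomb vu) := by
  obtain ⟨-, -, tb, tu, rfl, rfl, hbody⟩ := valRel_arr_iff.mp h
  exact .of_steps .fixBeta ⟨3, by norm_num, _, .zcomb .lam, _, .gOf_self _, _, .beta .lam, rfl⟩
    fun j hj => hbody j hj _ _ .lam .lam (h.fixEta_zfix j hj)

end

section

variable {dir : Dir} {Γ : List PTy} {a b c : PTy}

namespace LogRel

theorem var {n : ℕ} {τ : PTy} (h : Γ[n]? = some τ) : LogRel dir Γ (.var n) (.var n) τ :=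
  .intro (.var (by simp [h])) (List.getElem?_eq_some_iff.mp h).1 fun _ _ _ hγ =>
    let ⟨hs, hu, hv⟩ := hγ n τ h
    hv.termRel hs hu

theorem unit : LogRel dir Γ .unit .unit .unit :=
  .intro .unit trivial fun _ _ _ _ =>
    ValRel.termRel .unit .unit (valRel_unit_iff.mpr ⟨.unit, trivial, rfl, rfl⟩)

theorem tt : LogRel dir Γ .tt .tt .bool :=
  .intro .tt trivial fun _ _ _ _ =>
    ValRel.termRel .tt .tt (valRel_bool_iff.mpr ⟨.tt, trivial, .inl ⟨rfl, rfl⟩⟩)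

theorem ff : LogRel dir Γ .ff .ff .bool :=
  .intro .ff trivial fun _ _ _ _ =>
    ValRel.termRel .ff .ff (valRel_bool_iff.mpr ⟨.ff, trivial, .inr ⟨rfl, rfl⟩⟩)

theorem lam {t : STm} {u : UTm} (h : LogRel dir (a :: Γ) t u b) :
    LogRel dir Γ (.lam (repEmul a) t) (.lam u) (.arr a b) :=
  .intro (.lam h.hasTy) h.ws fun _ γs γu hγ =>
    ValRel.termRel .lam .lam <| valRel_arr_iff.mpr
      ⟨.lam (h.hasTy.subst (hasTy_liftS _ hγ.hasTy)), u.ws_subst h.ws (liftU_ws hγ.ws),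
        _, _, rfl, rfl, fun j hj vs vu hvs hvu hv => by
          rw [STm.subst_liftS_subst0, UTm.subst_liftU_subst0]
          exact h.termRel ((hγ.mono hj.le).cons hvs hvu hv)⟩

theorem app {t₁ t₂ : STm} {u₁ u₂ : UTm} (h₁ : LogRel dir Γ t₁ u₁ (.arr a b))
    (h₂ : LogRel dir Γ t₂ u₂ a) : LogRel dir Γ (.app t₁ t₂) (.app u₁ u₂) b :=
  .intro (.app h₁.hasTy h₂.hasTy) ⟨h₁.ws, h₂.ws⟩ fun _ γs γu hγ =>
    (h₁.termRel hγ).bind (Ds := .appL .hole (t₂.subst γs)) (Du := .appL .hole (u₂.subst γu))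
      trivial trivial fun _ hi v₁ w₁ hv₁ hw₁ hrel₁ =>
    (h₂.termRel (hγ.mono hi)).bind (Ds := .appR v₁ .hole) (Du := .appR w₁ .hole)
      ⟨hv₁, trivial⟩ ⟨hw₁, trivial⟩ fun _ hj _ _ hv₂ hw₂ hrel₂ =>
    (hrel₁.mono hj).app hv₂ hw₂ hrel₂

theorem pair {t₁ t₂ : STm} {u₁ u₂ : UTm} (h₁ : LogRel dir Γ t₁ u₁ a)
    (h₂ : LogRel dir Γ t₂ u₂ b) : LogRel dir Γ (.pair t₁ t₂) (.pair u₁ u₂) (.prod a b) :=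
  .intro (.pair h₁.hasTy h₂.hasTy) ⟨h₁.ws, h₂.ws⟩ fun _ γs γu hγ =>
    (h₁.termRel hγ).bind (Ds := .pairL .hole (t₂.subst γs)) (Du := .pairL .hole (u₂.subst γu))
      trivial trivial fun _ hi v₁ w₁ hv₁ hw₁ hrel₁ =>
    (h₂.termRel (hγ.mono hi)).bind (Ds := .pairR v₁ .hole) (Du := .pairR w₁ .hole)
      ⟨hv₁, trivial⟩ ⟨hw₁, trivial⟩ fun _ hj v₂ w₂ hv₂ hw₂ hrel₂ =>
    ValRel.termRel (.pair hv₁ hv₂) (.pair hw₁ hw₂) <| valRel_prod_iff.mpr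
      ⟨.pair hrel₁.hasTy hrel₂.hasTy, ⟨hrel₁.ws, hrel₂.ws⟩, v₁, v₂, w₁, w₂, rfl, rfl,
        hv₁, hv₂, hw₁, hw₂, fun _ _ => ⟨hrel₁.mono (by omega), hrel₂.mono (by omega)⟩⟩

theorem p1 {t : STm} {u : UTm} (h : LogRel dir Γ t u (.prod a b)) :
    LogRel dir Γ (.p1 t) (.p1 u) a :=
  .intro (.p1 h.hasTy) h.ws fun _ _ _ hγ =>
    (h.termRel hγ).bind (Ds := .p1 .hole) (Du := .p1 .hole) trivial trivial
      fun _ _ _ _ _ _ hrel => by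
    obtain ⟨-, -, v₁, v₂, u₁, u₂, rfl, rfl, hv₁, hv₂, hu₁, hu₂, hrec⟩ := valRel_prod_iff.mp hrel
    exact .of_steps (.p1V hv₁ hv₂) (UStep.p1V hu₁ hu₂).stepPlus
      fun j hj => (hrec j hj).1.termRel hv₁ hu₁

theorem p2 {t : STm} {u : UTm} (h : LogRel dir Γ t u (.prod a b)) :
    LogRel dir Γ (.p2 t) (.p2 u) b :=
  .intro (.p2 h.hasTy) h.ws fun _ _ _ hγ =>
    (h.termRel hγ).bind (Ds := .p2 .hole) (Du := .p2 .hole) trivial trivial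
      fun _ _ _ _ _ _ hrel => by
    obtain ⟨-, -, v₁, v₂, u₁, u₂, rfl, rfl, hv₁, hv₂, hu₁, hu₂, hrec⟩ := valRel_prod_iff.mp hrel
    exact .of_steps (.p2V hv₁ hv₂) (UStep.p2V hu₁ hu₂).stepPlus
      fun j hj => (hrec j hj).2.termRel hv₂ hu₂

theorem inl {t : STm} {u : UTm} (h : LogRel dir Γ t u a) :
    LogRel dir Γ (.inl t) (.inl u) (.sum a b) :=
  .intro (.inl h.hasTy) h.ws fun _ _ _ hγ =>
    (h.termRel hγ).bind (Ds := .inl .hole) (Du := .inl .hole) trivial trivial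
      fun _ _ v w hv hw hrel =>
    ValRel.termRel (.inl hv) (.inl hw) <| valRel_sum_iff.mpr
      ⟨.inl hrel.hasTy, hrel.ws, .inl ⟨v, w, rfl, rfl, hv, hw, fun _ _ => hrel.mono (by omega)⟩⟩

theorem inr {t : STm} {u : UTm} (h : LogRel dir Γ t u b) :
    LogRel dir Γ (.inr t) (.inr u) (.sum a b) :=
  .intro (.inr h.hasTy) h.ws fun _ _ _ hγ =>
    (h.termRel hγ).bind (Ds := .inr .hole) (Du := .inr .hole) trivial trivial
      fun _ _ v w hv hw hrel =>
    ValRel.termRel (.inr hv) (.inr hw) <| valRel_sum_iff.mpr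
      ⟨.inr hrel.hasTy, hrel.ws, .inr ⟨v, w, rfl, rfl, hv, hw, fun _ _ => hrel.mono (by omega)⟩⟩

theorem caseOf {t t₁ t₂ : STm} {u u₁ u₂ : UTm} (h : LogRel dir Γ t u (.sum a b))
    (h₁ : LogRel dir (a :: Γ) t₁ u₁ c) (h₂ : LogRel dir (b :: Γ) t₂ u₂ c) :
    LogRel dir Γ (.caseOf t t₁ t₂) (.caseOf u u₁ u₂) c :=
  .intro (.caseOf h.hasTy h₁.hasTy h₂.hasTy) ⟨h.ws, h₁.ws, h₂.ws⟩ fun _ γs γu hγ =>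
    (h.termRel hγ).bind
      (Ds := .caseOf .hole (t₁.subst (liftS γs)) (t₂.subst (liftS γs)))
      (Du := .caseOf .hole (u₁.subst (liftU γu)) (u₂.subst (liftU γu))) trivial trivial
      fun _ hi _ _ _ _ hrel => by
    obtain ⟨-, -, ⟨v, w, rfl, rfl, hv, hw, hrec⟩ | ⟨v, w, rfl, rfl, hv, hw, hrec⟩⟩ :=
      valRel_sum_iff.mp hrel
    · refine .of_steps (.caseL hv) (UStep.caseL hw).stepPlus fun j hj => ?_
      rw [STm.subst_liftS_subst0, UTm.subst_liftU_subst0]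
      exact h₁.termRel ((hγ.mono (by omega)).cons hv hw (hrec j hj))
    · refine .of_steps (.caseR hv) (UStep.caseR hw).stepPlus fun j hj => ?_
      rw [STm.subst_liftS_subst0, UTm.subst_liftU_subst0]
      exact h₂.termRel ((hγ.mono (by omega)).cons hv hw (hrec j hj))

theorem seq {t₁ t₂ : STm} {u₁ u₂ : UTm} (h₁ : LogRel dir Γ t₁ u₁ .unit)
    (h₂ : LogRel dir Γ t₂ u₂ c) : LogRel dir Γ (.seq t₁ t₂) (.seq u₁ u₂) c :=
  .intro (.seq h₁.hasTy h₂.hasTy) ⟨h₁.ws, h₂.ws⟩ fun _ γs γu hγ =>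
    (h₁.termRel hγ).bind (Ds := .seq .hole (t₂.subst γs)) (Du := .seq .hole (u₂.subst γu))
      trivial trivial fun _ hi _ _ _ _ hrel => by
    obtain ⟨-, -, rfl, rfl⟩ := valRel_unit_iff.mp hrel
    exact .of_steps .seqN UStep.seqN.stepPlus fun j hj => h₂.termRel (hγ.mono (by omega))

theorem tif {t t₁ t₂ : STm} {u u₁ u₂ : UTm} (h : LogRel dir Γ t u .bool)
    (h₁ : LogRel dir Γ t₁ u₁ c) (h₂ : LogRel dir Γ t₂ u₂ c) :
    LogRel dir Γ (.tif t t₁ t₂) (.tif u u₁ u₂) c :=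
  .intro (.tif h.hasTy h₁.hasTy h₂.hasTy) ⟨h.ws, h₁.ws, h₂.ws⟩ fun _ γs γu hγ =>
    (h.termRel hγ).bind (Ds := .tif .hole (t₁.subst γs) (t₂.subst γs))
      (Du := .tif .hole (u₁.subst γu) (u₂.subst γu)) trivial trivial
      fun _ hi _ _ _ _ hrel => by
    obtain ⟨-, -, ⟨rfl, rfl⟩ | ⟨rfl, rfl⟩⟩ := valRel_bool_iff.mp hrel
    · exact .of_steps .tifT UStep.tifT.stepPlus fun j hj => h₁.termRel (hγ.mono (by omega))
    · exact .of_steps .tifF UStep.tifF.stepPlus fun j hj => h₂.termRel (hγ.mono (by omega))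

theorem fixt {t : STm} {u : UTm}
    (h : LogRel dir Γ t u (.arr (.arr a b) (.arr a b))) :
    LogRel dir Γ (.fixt (repEmul a) (repEmul b) t) (.app Zcomb u) (.arr a b) :=
  .intro (.fixt h.hasTy) ⟨by simp [Zcomb, UTm.ws], h.ws⟩ fun _ _ _ hγ =>
    (h.termRel hγ).bind (Ds := .fixt _ _ .hole) (Du := .appR Zcomb .hole) trivial ⟨.lam, trivial⟩
      fun _ _ _ _ _ _ hrel => hrel.fixt

end LogRel

end

theorem repEmul_toP (τ : Ty) : repEmul τ.toP = τ := by
  induction τ <;> simp [Ty.toP, repEmul, *]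

theorem logRel_erase {Γ : List Ty} {t : STm} {τ : Ty} (ht : HasTy Γ t τ) (dir : Dir) :
    LogRel dir (Γ.map Ty.toP) t (erase t) τ.toP := by
  induction ht with
  | var h => exact .var (by simp [h])
  | unit => exact .unit
  | tt => exact .tt
  | ff => exact .ff
  | lam _ ih => simpa only [repEmul_toP, erase, Ty.toP] using ih.lam
  | app _ _ ih₁ ih₂ => exact ih₁.app ih₂
  | pair _ _ ih₁ ih₂ => exact ih₁.pair ih₂
  | p1 _ ih => exact ih.p1
  | p2 _ ih => exact ih.p2
  | inl _ ih => exact ih.inl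
  | inr _ ih => exact ih.inr
  | caseOf _ _ _ ih ih₁ ih₂ => exact ih.caseOf ih₁ ih₂
  | seq _ _ ih₁ ih₂ => exact ih₁.seq ih₂
  | tif _ _ _ ih ih₁ ih₂ => exact ih.tif ih₁ ih₂
  | fixt _ ih => simpa only [repEmul_toP, erase, Ty.toP] using ih.fixt

end FAC

open FAC in
/-- type erasure is semantics-preserving: every well-typed term
is logically related to its erasure, up to any number of steps and in both
directions. -/
theorem erase_semantics_preserving {Γ : List Ty} {t : STm} {τ : Ty}
    (ht : HasTy Γ t τ) :
    ∀ (n : ℕ) (dir : Dir), LogRelN dir n (Γ.map Ty.toP) t (erase t) τ.toP :=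
  fun n dir => logRel_erase ht dir n
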